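/- arXiv:1311.4685 — 2 statements merged into one kernel-verified Lean document; each statement's English description precedes it below -/
import Mathlib

section
/- Let 1 ≤ p < ∞, let P : X → Y be a continuous m-homogeneous polynomial between Banach spaces and let P̌ : X × ⋯ × X → Y be the unique continuous symmetric m-linear map satisfying P̌(x, …, x) = P(x) for all x ∈ X. Then P is a factorable strongly p-summing polynomial if and only if P̌ is a factorable strongly p-summing m-linear operator. -/
open scoped BigOperators
open MeasureTheory

noncomputable section

section Defs

variable (𝕜 : Type*) [RCLike 𝕜]

section Multi

variable {n : ℕ} {X : Fin n → Type*} {Y : Type*}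
  [∀ k, NormedAddCommGroup (X k)] [∀ k, NormedSpace 𝕜 (X k)]
  [NormedAddCommGroup Y] [NormedSpace 𝕜 Y]

/-- `C` witnesses the defining inequality of factorable strongly `p`-summing
multilinear operators. -/
def FactStronglySummingBound (p : ℝ) (T : ContinuousMultilinearMap 𝕜 X Y) (C : ℝ) : Prop :=
  0 ≤ C ∧ ∀ (m₁ m₂ : ℕ) (x : Fin m₁ → Fin m₂ → (∀ k, X k)) (lam : Fin m₁ → Fin m₂ → 𝕜),
    (∑ j, ‖∑ i, lam j i • T (x j i)‖ ^ p) ^ (1 / p) ≤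
      C * ⨆ φ : {φ : ContinuousMultilinearMap 𝕜 X 𝕜 // ‖φ‖ ≤ 1},
        (∑ j, ‖∑ i, lam j i • φ.1 (x j i)‖ ^ p) ^ (1 / p)

/-- Factorable strongly `p`-summing continuous multilinear operators. -/
def FactStronglySumming (p : ℝ) (T : ContinuousMultilinearMap 𝕜 X Y) : Prop :=
  ∃ C, FactStronglySummingBound 𝕜 p T C

/-- The factorable strongly `p`-summing norm `‖T‖_{FSt,p}` (the least admissible constant). -/
def fstMultiNorm (p : ℝ) (T : ContinuousMultilinearMap 𝕜 X Y) : ℝ :=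
  sInf {C | FactStronglySummingBound 𝕜 p T C}

/-- Strongly `p`-summing continuous multilinear operators (Dimant). -/
def StronglySumming (p : ℝ) (T : ContinuousMultilinearMap 𝕜 X Y) : Prop :=
  ∃ C : ℝ, 0 ≤ C ∧ ∀ (m : ℕ) (x : Fin m → (∀ k, X k)),
    (∑ j, ‖T (x j)‖ ^ p) ^ (1 / p) ≤
      C * ⨆ φ : {φ : ContinuousMultilinearMap 𝕜 X 𝕜 // ‖φ‖ ≤ 1},
        (∑ j, ‖φ.1 (x j)‖ ^ p) ^ (1 / p)

/-- Factorable `p`-dominated continuous multilinear operators. -/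
def FactorablePDominated (p : ℝ) (T : ContinuousMultilinearMap 𝕜 X Y) : Prop :=
  ∃ C : ℝ, 0 ≤ C ∧ ∀ (m₁ m₂ : ℕ) (x : Fin m₁ → Fin m₂ → (∀ k, X k))
    (lam : Fin m₁ → Fin m₂ → 𝕜),
    (∑ j, ‖∑ i, lam j i • T (x j i)‖ ^ p) ^ (1 / p) ≤
      C * ⨆ φ : ∀ k, {f : X k →L[𝕜] 𝕜 // ‖f‖ ≤ 1},
        (∑ j, ‖∑ i, lam j i • ∏ k, (φ k).1 (x j i k)‖ ^ p) ^ (1 / p)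

/-- `p`-semi-integral continuous multilinear operators. -/
def PSemiIntegral (p : ℝ) (T : ContinuousMultilinearMap 𝕜 X Y) : Prop :=
  ∃ C : ℝ, 0 ≤ C ∧ ∀ (m : ℕ) (x : Fin m → (∀ k, X k)),
    (∑ j, ‖T (x j)‖ ^ p) ^ (1 / p) ≤
      C * ⨆ φ : ∀ k, {f : X k →L[𝕜] 𝕜 // ‖f‖ ≤ 1},
        (∑ j, ‖∏ k, (φ k).1 (x j k)‖ ^ p) ^ (1 / p)

end Multi

section Poly

variable {X Y : Type*} [NormedAddCommGroup X] [NormedSpace 𝕜 X]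
  [NormedAddCommGroup Y] [NormedSpace 𝕜 Y]

/-- `P` is a continuous `m`-homogeneous polynomial: the diagonal of a continuous
`m`-linear map. -/
def IsHomogPoly (m : ℕ) (P : X → Y) : Prop :=
  ∃ T : ContinuousMultilinearMap 𝕜 (fun _ : Fin m => X) Y, ∀ x, P x = T (fun _ => x)

/-- Sup norm of a (homogeneous polynomial) map on the closed unit ball. -/
def polyNorm (P : X → Y) : ℝ :=
  ⨆ x : {x : X // ‖x‖ ≤ 1}, ‖P x.1‖

/-- `C` witnesses the defining inequality of factorable strongly `p`-summing
`m`-homogeneous polynomials. -/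
def FactStronglySummingPolyBound (m : ℕ) (p : ℝ) (P : X → Y) (C : ℝ) : Prop :=
  0 ≤ C ∧ ∀ (m₁ m₂ : ℕ) (x : Fin m₁ → Fin m₂ → X) (lam : Fin m₁ → Fin m₂ → 𝕜),
    (∑ j, ‖∑ i, lam j i • P (x j i)‖ ^ p) ^ (1 / p) ≤
      C * ⨆ q : {q : X → 𝕜 // IsHomogPoly 𝕜 m q ∧ polyNorm q ≤ 1},
        (∑ j, ‖∑ i, lam j i • q.1 (x j i)‖ ^ p) ^ (1 / p)

/-- Factorable strongly `p`-summing `m`-homogeneous polynomials. -/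
def FactStronglySummingPoly (m : ℕ) (p : ℝ) (P : X → Y) : Prop :=
  IsHomogPoly 𝕜 m P ∧ ∃ C, FactStronglySummingPolyBound 𝕜 m p P C

/-- The factorable strongly `p`-summing norm `‖P‖_{FSt,p}` of a polynomial. -/
def fstPolyNorm (m : ℕ) (p : ℝ) (P : X → Y) : ℝ :=
  sInf {C | FactStronglySummingPolyBound 𝕜 m p P C}

/-- `C` witnesses the defining inequality of absolutely `p`-summing linear operators. -/
def AbsSummingBound (p : ℝ) (u : X →L[𝕜] Y) (C : ℝ) : Prop :=
  0 ≤ C ∧ ∀ (m : ℕ) (x : Fin m → X),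
    (∑ j, ‖u (x j)‖ ^ p) ^ (1 / p) ≤
      C * ⨆ φ : {φ : X →L[𝕜] 𝕜 // ‖φ‖ ≤ 1}, (∑ j, ‖φ.1 (x j)‖ ^ p) ^ (1 / p)

/-- Absolutely `p`-summing continuous linear operators. -/
def AbsolutelySumming (p : ℝ) (u : X →L[𝕜] Y) : Prop :=
  ∃ C, AbsSummingBound 𝕜 p u C

/-- The absolutely `p`-summing norm `π_p(u)` (the least admissible constant). -/
def piSummingNorm (p : ℝ) (u : X →L[𝕜] Y) : ℝ :=
  sInf {C | AbsSummingBound 𝕜 p u C}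

end Poly

end Defs

end

/-!
The bridge is polarization. For an `m`-linear `S` with symmetric part `Š = (m!)⁻¹ ∑_σ S ∘ σ`,
`2^m m! Š(x₁, …, xₘ) = ∑_{ε ∈ {±1}^m} ε₁⋯εₘ S(y_ε, …, y_ε)` where `y_ε = ∑ₖ εₖxₖ`,
so `‖Š‖ ≤ mᵐ/m!` whenever `‖S(x, …, x)‖ ≤ ‖x‖ᵐ`.

Since `T` is symmetric it is its own symmetric part, and the formula writes the left side of the
multilinear inequality for `T` as the left side of the polynomial inequality for `P` at the points
`y_ε` with coefficients `λ_j^i ε₁⋯εₘ / (2^m m!)`. On the right, the same formula turns the term of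
each polynomial `q = S(x, …, x)` of norm at most one into the term of `Š`; this gives the constant
`C mᵐ/m!`. Conversely, on the diagonal a multilinear functional of norm at most one is a polynomial
of norm at most one.
-/

open Finset Function

section Polarization

def boolSign (R : Type*) [Ring R] (b : Bool) : R := if b then 1 else -1

variable {R : Type*} [CommRing R] {ι : Type*} [Fintype ι] [DecidableEq ι]

@[simp]
lemma boolSign_not (b : Bool) : boolSign R (!b) = -boolSign R b := by
  cases b <;> simp [boolSign]

@[simp]
lemma boolSign_mul_self (b : Bool) : boolSign R b * boolSign R b = 1 := by
  cases b <;> simp [boolSign]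

-- Flipping `ε j` for a `j` outside the range of `r` negates the summand.
lemma sum_prod_boolSign_mul_prod_boolSign_comp_eq_zero {r : ι → ι} (hr : ¬Surjective r) :
    ∑ ε : ι → Bool, (∏ k, boolSign R (ε k)) * ∏ k, boolSign R (ε (r k)) = 0 := by
  obtain ⟨j, hj⟩ : ∃ j, ∀ k, r k ≠ j := by simpa [Surjective] using hr
  let flip : (ι → Bool) → ι → Bool := fun ε => update ε j (!ε j)
  have hflip_prod (ε : ι → Bool) : ∏ k, boolSign R (flip ε k) = -∏ k, boolSign R (ε k) := by
    rw [← mul_prod_erase _ _ (mem_univ j), ← mul_prod_erase _ _ (mem_univ j)]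
    have : ∀ k ∈ univ.erase j, boolSign R (flip ε k) = boolSign R (ε k) := fun k hk => by
      simp [flip, update_of_ne (ne_of_mem_erase hk)]
    rw [prod_congr rfl this]
    simp [flip]
  have hflip_comp (ε : ι → Bool) : ∏ k, boolSign R (flip ε (r k)) = ∏ k, boolSign R (ε (r k)) :=
    prod_congr rfl fun k _ => by simp [flip, update_of_ne (hj k)]
  refine sum_ninvolution flip (fun ε => ?_) (fun ε _ h => ?_) (fun _ => mem_univ _) (fun ε => ?_)
  · rw [hflip_prod, hflip_comp]; ring
  · have := congrFun h j; simp [flip] at this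
  · ext k; by_cases hk : k = j <;> simp [flip, hk]

lemma sum_prod_boolSign_mul_prod_boolSign_perm (σ : Equiv.Perm ι) :
    ∑ ε : ι → Bool, (∏ k, boolSign R (ε k)) * ∏ k, boolSign R (ε (σ k)) =
      2 ^ Fintype.card ι := by
  have (ε : ι → Bool) : (∏ k, boolSign R (ε k)) * ∏ k, boolSign R (ε (σ k)) = 1 := by
    rw [Equiv.prod_comp σ (fun k => boolSign R (ε k)), ← prod_mul_distrib]
    simp
  simp [this]

variable {M N : Type*} [AddCommGroup M] [Module R M] [AddCommGroup N] [Module R N]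

theorem MultilinearMap.polarization (f : MultilinearMap R (fun _ : ι => M) N) (x : ι → M) :
    ∑ ε : ι → Bool, (∏ k, boolSign R (ε k)) • f (fun _ => ∑ i, boolSign R (ε i) • x i) =
      (2 : R) ^ Fintype.card ι • ∑ σ : Equiv.Perm ι, f (x ∘ σ) := by
  have expand (ε : ι → Bool) : f (fun _ => ∑ i, boolSign R (ε i) • x i) =
      ∑ r : ι → ι, (∏ k, boolSign R (ε (r k))) • f (x ∘ r) := by
    rw [f.map_sum]
    exact sum_congr rfl fun r _ => f.map_smul_univ _ _
  simp_rw [expand, smul_sum, smul_smul]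
  rw [sum_comm]
  simp_rw [← sum_smul]
  symm
  refine Fintype.sum_of_injective (fun σ : Equiv.Perm ι => ⇑σ) Equiv.coe_fn_injective _ _
    (fun r hr => ?_) (fun σ => by rw [sum_prod_boolSign_mul_prod_boolSign_perm])
  rw [sum_prod_boolSign_mul_prod_boolSign_comp_eq_zero, zero_smul]
  exact fun hs => hr ⟨Equiv.ofBijective r (Finite.surjective_iff_bijective.mp hs), rfl⟩

end Polarization

section Normed

@[simp]
lemma norm_boolSign {R : Type*} [NormedRing R] [NormOneClass R] (b : Bool) :
    ‖boolSign R b‖ = 1 := by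
  cases b <;> simp [boolSign]

variable {𝕜 : Type*} [RCLike 𝕜]

namespace ContinuousMultilinearMap

variable {ι : Type*} [Fintype ι] {G : Type*} [NormedAddCommGroup G] [NormedSpace 𝕜 G]

lemma opNorm_le_of_forall_norm_le_one {E : ι → Type*} [∀ i, NormedAddCommGroup (E i)]
    [∀ i, NormedSpace 𝕜 (E i)] (f : ContinuousMultilinearMap 𝕜 E G) {C : ℝ} (hC : 0 ≤ C)
    (h : ∀ u : ∀ i, E i, (∀ i, ‖u i‖ ≤ 1) → ‖f u‖ ≤ C) : ‖f‖ ≤ C := by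
  refine f.opNorm_le_bound hC fun y => ?_
  by_cases! hy : ∃ i, y i = 0
  · obtain ⟨i, hi⟩ := hy
    rw [f.map_coord_zero i hi, norm_zero]
    positivity
  have hy' (i : ι) : (‖y i‖ : 𝕜) ≠ 0 := by simpa using hy i
  set u : ∀ i, E i := fun i => (‖y i‖ : 𝕜)⁻¹ • y i
  have hyu : y = fun i => (‖y i‖ : 𝕜) • u i := by
    ext i
    exact (smul_inv_smul₀ (hy' i) (y i)).symm
  have hu (i : ι) : ‖u i‖ ≤ 1 := by simp [u, norm_smul, norm_ne_zero_iff.mpr (hy i)]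
  calc ‖f y‖ = (∏ i, ‖y i‖) * ‖f u‖ := by
        conv_lhs => rw [hyu, f.map_smul_univ, norm_smul, norm_prod]
        simp
    _ ≤ (∏ i, ‖y i‖) * C := by gcongr; exact h u hu
    _ = C * ∏ i, ‖y i‖ := mul_comm _ _

variable {X : Type*} [NormedAddCommGroup X] [NormedSpace 𝕜 X]

lemma norm_apply_const_le_of_norm_le_one (f : ContinuousMultilinearMap 𝕜 (fun _ : ι => X) G)
    {y : X} (hy : ‖y‖ ≤ 1) : ‖f fun _ => y‖ ≤ ‖f‖ :=
  (f.le_opNorm _).trans <|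
    mul_le_of_le_one_right (norm_nonneg f) (prod_le_one (fun _ _ => norm_nonneg y) fun _ _ => hy)

variable [DecidableEq ι]

def symmetricPart (f : ContinuousMultilinearMap 𝕜 (fun _ : ι => X) G) :
    ContinuousMultilinearMap 𝕜 (fun _ : ι => X) G :=
  ((Fintype.card ι).factorial : 𝕜)⁻¹ • ∑ σ : Equiv.Perm ι, f.domDomCongr σ

lemma symmetricPart_apply (f : ContinuousMultilinearMap 𝕜 (fun _ : ι => X) G) (x : ι → X) :
    f.symmetricPart x = ((Fintype.card ι).factorial : 𝕜)⁻¹ • ∑ σ : Equiv.Perm ι, f (x ∘ σ) := by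
  simp only [symmetricPart, smul_apply, _root_.sum_apply, domDomCongr_apply]
  rfl

lemma symmetricPart_eq_self {f : ContinuousMultilinearMap 𝕜 (fun _ : ι => X) G}
    (hf : ∀ (x : ι → X) (σ : Equiv.Perm ι), f (x ∘ σ) = f x) : f.symmetricPart = f := by
  ext x
  rw [symmetricPart_apply]
  simp [hf, Fintype.card_perm, ← Nat.cast_smul_eq_nsmul 𝕜, Nat.factorial_ne_zero]

lemma norm_symmetricPart_le (f : ContinuousMultilinearMap 𝕜 (fun _ : ι => X) G) {C : ℝ}
    (hC : 0 ≤ C) (hf : ∀ z, ‖f fun _ => z‖ ≤ C * ‖z‖ ^ Fintype.card ι) :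
    ‖f.symmetricPart‖ ≤ (Fintype.card ι : ℝ) ^ Fintype.card ι / (Fintype.card ι).factorial * C := by
  set n := Fintype.card ι with hn
  refine f.symmetricPart.opNorm_le_of_forall_norm_le_one (by positivity) fun u hu => ?_
  have hpolar : ∑ ε : ι → Bool, (∏ k, boolSign 𝕜 (ε k)) • f (fun _ => ∑ i, boolSign 𝕜 (ε i) • u i) =
      (2 : 𝕜) ^ n • ∑ σ : Equiv.Perm ι, f (u ∘ σ) :=
    f.toMultilinearMap.polarization u
  have hterm (ε : ι → Bool) : ‖f fun _ => ∑ i, boolSign 𝕜 (ε i) • u i‖ ≤ C * n ^ n := by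
    refine (hf _).trans (mul_le_mul_of_nonneg_left (pow_le_pow_left₀ (norm_nonneg _) ?_ n) hC)
    refine (norm_sum_le _ _).trans ?_
    simpa [norm_smul] using sum_le_sum fun i (_ : i ∈ univ) => hu i
  calc ‖f.symmetricPart u‖
      = ‖((2 : 𝕜) ^ n * n.factorial)⁻¹ • ∑ ε : ι → Bool,
          (∏ k, boolSign 𝕜 (ε k)) • f fun _ => ∑ i, boolSign 𝕜 (ε i) • u i‖ := by
        rw [symmetricPart_apply, ← hn, hpolar, smul_smul]
        congr 2
        field_simp
    _ ≤ ((2 : ℝ) ^ n * n.factorial)⁻¹ * ∑ _ε : ι → Bool, C * n ^ n := by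
        rw [norm_smul]
        refine mul_le_mul (by simp) ((norm_sum_le _ _).trans (sum_le_sum fun ε _ => ?_))
          (norm_nonneg _) (by positivity)
        simpa [norm_smul, norm_prod] using hterm ε
    _ = (n : ℝ) ^ n / n.factorial * C := by
        rw [sum_const, card_univ, Fintype.card_fun, Fintype.card_bool, ← hn, nsmul_eq_mul]
        push_cast
        field_simp

end ContinuousMultilinearMap

end Normed

section Polynomial

variable {𝕜 : Type*} [RCLike 𝕜] {X Y : Type*} [NormedAddCommGroup X] [NormedSpace 𝕜 X]
  [NormedAddCommGroup Y] [NormedSpace 𝕜 Y] {m : ℕ} {P : X → Y}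

lemma polyNorm_apply_const_le (f : ContinuousMultilinearMap 𝕜 (fun _ : Fin m => X) Y) :
    polyNorm (fun x => f fun _ => x) ≤ ‖f‖ :=
  Real.iSup_le (fun y => f.norm_apply_const_le_of_norm_le_one y.2) (norm_nonneg f)

namespace IsHomogPoly

lemma map_smul (hP : IsHomogPoly 𝕜 m P) (c : 𝕜) (x : X) : P (c • x) = c ^ m • P x := by
  obtain ⟨T, hT⟩ := hP
  simpa [hT] using T.map_smul_univ (fun _ => c) fun _ => x

lemma norm_le_polyNorm (hP : IsHomogPoly 𝕜 m P) {x : X} (hx : ‖x‖ ≤ 1) : ‖P x‖ ≤ polyNorm P := by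
  obtain ⟨T, hT⟩ := hP
  refine le_ciSup (f := fun y : {y : X // ‖y‖ ≤ 1} => ‖P y.1‖) ⟨‖T‖, ?_⟩ ⟨x, hx⟩
  rintro _ ⟨y, rfl⟩
  simpa [hT] using T.norm_apply_const_le_of_norm_le_one y.2

lemma norm_le_polyNorm_mul_pow (hP : IsHomogPoly 𝕜 m P) (x : X) :
    ‖P x‖ ≤ polyNorm P * ‖x‖ ^ m := by
  rcases eq_or_ne x 0 with rfl | hx
  · rcases Nat.eq_zero_or_pos m with rfl | hm
    · simpa using hP.norm_le_polyNorm (x := 0) (by simp)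
    · simpa [zero_pow hm.ne'] using hP.map_smul 0 0
  have hx' : (‖x‖ : 𝕜) ≠ 0 := by simpa using hx
  have hunit : ‖(‖x‖ : 𝕜)⁻¹ • x‖ ≤ 1 := by simp [norm_smul, hx]
  calc ‖P x‖ = ‖P ((‖x‖ : 𝕜) • (‖x‖ : 𝕜)⁻¹ • x)‖ := by rw [smul_inv_smul₀ hx']
    _ = ‖x‖ ^ m * ‖P ((‖x‖ : 𝕜)⁻¹ • x)‖ := by simp [hP.map_smul, norm_smul]
    _ ≤ ‖x‖ ^ m * polyNorm P := by gcongr; exact hP.norm_le_polyNorm hunit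
    _ = polyNorm P * ‖x‖ ^ m := mul_comm _ _

end IsHomogPoly

end Polynomial

section FiniteSums

variable {𝕜 : Type*} [NormedField 𝕜] {κ ρ : Type*} [Fintype κ] [Fintype ρ] {p : ℝ}

lemma sum_norm_smul_rpow_rpow_one_div {E : Type*} [NormedAddCommGroup E] [NormedSpace 𝕜 E]
    (hp : p ≠ 0) (c : 𝕜) (v : κ → E) :
    (∑ j, ‖c • v j‖ ^ p) ^ (1 / p) = ‖c‖ * (∑ j, ‖v j‖ ^ p) ^ (1 / p) := by
  simp_rw [norm_smul, Real.mul_rpow (norm_nonneg c) (norm_nonneg _), ← mul_sum]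
  rw [Real.mul_rpow (by positivity) (by positivity), ← Real.rpow_mul (norm_nonneg c),
    mul_one_div_cancel hp, Real.rpow_one]

lemma bddAbove_range_sum_norm_rpow_rpow_one_div {A : Type*} (hp : 0 < p) (lam : κ → ρ → 𝕜)
    (F : A → κ → ρ → 𝕜) (b : κ → ρ → ℝ) (hF : ∀ a j i, ‖F a j i‖ ≤ b j i) :
    BddAbove (Set.range fun a => (∑ j, ‖∑ i, lam j i • F a j i‖ ^ p) ^ (1 / p)) := by
  refine ⟨(∑ j, (∑ i, ‖lam j i‖ * b j i) ^ p) ^ (1 / p), ?_⟩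
  rintro _ ⟨a, rfl⟩
  have hj (j : κ) : ‖∑ i, lam j i • F a j i‖ ≤ ∑ i, ‖lam j i‖ * b j i :=
    (norm_sum_le _ _).trans <| sum_le_sum fun i _ => by
      rw [norm_smul]; exact mul_le_mul_of_nonneg_left (hF a j i) (norm_nonneg _)
  exact Real.rpow_le_rpow (by positivity)
    (sum_le_sum fun j _ => Real.rpow_le_rpow (norm_nonneg _) (hj j) hp.le)
    (one_div_nonneg.mpr hp.le)

end FiniteSums

section DualSup

variable {𝕜 : Type*} [RCLike 𝕜] {κ ρ : Type*} [Fintype κ] [Fintype ρ] {p : ℝ}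

lemma sum_norm_rpow_rpow_one_div_le_opNorm_mul_iSup {n : ℕ} {E : Fin n → Type*}
    [∀ k, NormedAddCommGroup (E k)] [∀ k, NormedSpace 𝕜 (E k)] (hp : 0 < p)
    (ψ : ContinuousMultilinearMap 𝕜 E 𝕜) (x : κ → ρ → ∀ k, E k) (lam : κ → ρ → 𝕜) :
    (∑ j, ‖∑ i, lam j i • ψ (x j i)‖ ^ p) ^ (1 / p) ≤
      ‖ψ‖ * ⨆ φ : {φ : ContinuousMultilinearMap 𝕜 E 𝕜 // ‖φ‖ ≤ 1},
        (∑ j, ‖∑ i, lam j i • φ.1 (x j i)‖ ^ p) ^ (1 / p) := by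
  rcases eq_or_ne ψ 0 with rfl | hψ
  · simp [Real.zero_rpow hp.ne', hp.ne']
  have hψ' : (‖ψ‖ : 𝕜) ≠ 0 := by simpa using hψ
  set ψ₁ := (‖ψ‖ : 𝕜)⁻¹ • ψ
  have hψ₁ : ‖ψ₁‖ ≤ 1 := by simp [ψ₁, norm_smul, hψ]
  have hbdd := bddAbove_range_sum_norm_rpow_rpow_one_div hp lam
    (fun (φ : {φ : ContinuousMultilinearMap 𝕜 E 𝕜 // ‖φ‖ ≤ 1}) j i => φ.1 (x j i))
    (fun j i => ∏ k, ‖x j i k‖) fun φ j i =>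
      (φ.1.le_opNorm _).trans (mul_le_of_le_one_left (by positivity) φ.2)
  have hψφ (j : κ) : ∑ i, lam j i • ψ (x j i) = (‖ψ‖ : 𝕜) • ∑ i, lam j i • ψ₁ (x j i) := by
    simp only [ψ₁, smul_apply, smul_eq_mul, mul_sum]
    exact sum_congr rfl fun i _ => by field_simp
  simp_rw [hψφ, sum_norm_smul_rpow_rpow_one_div hp.ne', RCLike.norm_ofReal, abs_norm]
  exact mul_le_mul_of_nonneg_left (le_ciSup hbdd ⟨ψ₁, hψ₁⟩) (norm_nonneg ψ)

end DualSup

section Polarized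

variable (𝕜 : Type*) [RCLike 𝕜] {X : Type*} [NormedAddCommGroup X] [NormedSpace 𝕜 X]
  {ι ρ : Type*} [Fintype ι] [DecidableEq ι] [Fintype ρ]

def polarizedPoint (x : ρ → ι → X) (z : ρ × (ι → Bool)) : X :=
  ∑ k, boolSign 𝕜 (z.2 k) • x z.1 k

variable {𝕜}

def polarizedCoeff (lam : ρ → 𝕜) (z : ρ × (ι → Bool)) : 𝕜 :=
  ((2 : 𝕜) ^ Fintype.card ι * (Fintype.card ι).factorial)⁻¹ * lam z.1 * ∏ k, boolSign 𝕜 (z.2 k)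

lemma sum_polarizedCoeff_smul_apply_polarizedPoint {G : Type*} [NormedAddCommGroup G]
    [NormedSpace 𝕜 G] (f : ContinuousMultilinearMap 𝕜 (fun _ : ι => X) G) (x : ρ → ι → X)
    (lam : ρ → 𝕜) :
    ∑ z, polarizedCoeff lam z • f (fun _ => polarizedPoint 𝕜 x z) =
      ∑ i, lam i • f.symmetricPart (x i) := by
  rw [Fintype.sum_prod_type]
  refine sum_congr rfl fun i _ => ?_
  have hpolar : ∑ ε : ι → Bool,
      (∏ k, boolSign 𝕜 (ε k)) • f (fun _ => ∑ k, boolSign 𝕜 (ε k) • x i k) =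
        (2 : 𝕜) ^ Fintype.card ι • ∑ σ : Equiv.Perm ι, f (x i ∘ σ) :=
    f.toMultilinearMap.polarization (x i)
  simp only [polarizedCoeff, polarizedPoint, mul_assoc, ← smul_smul, ← smul_sum]
  rw [hpolar, f.symmetricPart_apply, smul_smul, smul_smul, smul_smul]
  congr 1
  field_simp

end Polarized

section FactorableStronglySumming

variable {𝕜 : Type*} [RCLike 𝕜] {X Y : Type*} [NormedAddCommGroup X] [NormedSpace 𝕜 X]
  [NormedAddCommGroup Y] [NormedSpace 𝕜 Y] {m : ℕ} {p C : ℝ}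

lemma FactStronglySummingPolyBound.le_of_fintype {P : X → Y}
    (h : FactStronglySummingPolyBound 𝕜 m p P C) {m₁ : ℕ} {ρ : Type*} [Fintype ρ]
    (x : Fin m₁ → ρ → X) (lam : Fin m₁ → ρ → 𝕜) :
    (∑ j, ‖∑ i, lam j i • P (x j i)‖ ^ p) ^ (1 / p) ≤
      C * ⨆ q : {q : X → 𝕜 // IsHomogPoly 𝕜 m q ∧ polyNorm q ≤ 1},
        (∑ j, ‖∑ i, lam j i • q.1 (x j i)‖ ^ p) ^ (1 / p) := by
  let e := (Fintype.equivFin ρ).symm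
  have hP (j : Fin m₁) : ∑ i, lam j (e i) • P (x j (e i)) = ∑ i, lam j i • P (x j i) :=
    e.sum_comp fun i => lam j i • P (x j i)
  have hq (q : X → 𝕜) (j : Fin m₁) : ∑ i, lam j (e i) • q (x j (e i)) = ∑ i, lam j i • q (x j i) :=
    e.sum_comp fun i => lam j i • q (x j i)
  simpa only [hP, hq] using
    h.2 m₁ (Fintype.card ρ) (fun j i => x j (e i)) (fun j i => lam j (e i))

lemma FactStronglySummingPolyBound.factStronglySummingBound
    {T : ContinuousMultilinearMap 𝕜 (fun _ : Fin m => X) Y}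
    (hT : ∀ (x : Fin m → X) (σ : Equiv.Perm (Fin m)), T (x ∘ σ) = T x) (hp : 0 < p)
    (h : FactStronglySummingPolyBound 𝕜 m p (fun x => T fun _ => x) C) :
    FactStronglySummingBound 𝕜 p T (C * (m ^ m / m.factorial)) := by
  refine ⟨mul_nonneg h.1 (by positivity), fun m₁ m₂ x lam => ?_⟩
  have hpoly : (⨆ q : {q : X → 𝕜 // IsHomogPoly 𝕜 m q ∧ polyNorm q ≤ 1},
      (∑ j, ‖∑ z, polarizedCoeff (lam j) z • q.1 (polarizedPoint 𝕜 (x j) z)‖ ^ p) ^ (1 / p)) ≤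
      m ^ m / m.factorial *
        ⨆ φ : {φ : ContinuousMultilinearMap 𝕜 (fun _ : Fin m => X) 𝕜 // ‖φ‖ ≤ 1},
          (∑ j, ‖∑ i, lam j i • φ.1 (x j i)‖ ^ p) ^ (1 / p) := by
    refine Real.iSup_le (fun ⟨q, hq, hq₁⟩ => ?_)
      (mul_nonneg (by positivity) (Real.iSup_nonneg fun _ => by positivity))
    have ⟨S, hS⟩ := hq
    have hS_diag (z : X) : ‖S fun _ => z‖ ≤ 1 * ‖z‖ ^ Fintype.card (Fin m) := by
      rw [← hS, Fintype.card_fin]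
      exact (hq.norm_le_polyNorm_mul_pow z).trans (by gcongr)
    have hS_sym : ‖S.symmetricPart‖ ≤ m ^ m / m.factorial := by
      simpa using S.norm_symmetricPart_le zero_le_one hS_diag
    simp_rw [hS, sum_polarizedCoeff_smul_apply_polarizedPoint]
    exact (sum_norm_rpow_rpow_one_div_le_opNorm_mul_iSup hp _ x lam).trans
      (mul_le_mul_of_nonneg_right hS_sym (Real.iSup_nonneg fun _ => by positivity))
  calc (∑ j, ‖∑ i, lam j i • T (x j i)‖ ^ p) ^ (1 / p)
      = (∑ j, ‖∑ z, polarizedCoeff (lam j) z • T (fun _ => polarizedPoint 𝕜 (x j) z)‖ ^ p) ^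
          (1 / p) := by
        simp_rw [sum_polarizedCoeff_smul_apply_polarizedPoint, T.symmetricPart_eq_self hT]
    _ ≤ C * ⨆ q : {q : X → 𝕜 // IsHomogPoly 𝕜 m q ∧ polyNorm q ≤ 1},
          (∑ j, ‖∑ z, polarizedCoeff (lam j) z • q.1 (polarizedPoint 𝕜 (x j) z)‖ ^ p) ^ (1 / p) :=
        h.le_of_fintype _ _
    _ ≤ C * (m ^ m / m.factorial *
          ⨆ φ : {φ : ContinuousMultilinearMap 𝕜 (fun _ : Fin m => X) 𝕜 // ‖φ‖ ≤ 1},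
            (∑ j, ‖∑ i, lam j i • φ.1 (x j i)‖ ^ p) ^ (1 / p)) :=
        mul_le_mul_of_nonneg_left hpoly h.1
    _ = _ := by ring

lemma FactStronglySummingBound.factStronglySummingPolyBound
    {T : ContinuousMultilinearMap 𝕜 (fun _ : Fin m => X) Y} (hp : 0 < p)
    (h : FactStronglySummingBound 𝕜 p T C) :
    FactStronglySummingPolyBound 𝕜 m p (fun x => T fun _ => x) C := by
  refine ⟨h.1, fun m₁ m₂ x lam => (h.2 m₁ m₂ (fun j i _ => x j i) lam).trans ?_⟩
  have hbdd := bddAbove_range_sum_norm_rpow_rpow_one_div hp lam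
    (fun (q : {q : X → 𝕜 // IsHomogPoly 𝕜 m q ∧ polyNorm q ≤ 1}) j i => q.1 (x j i))
    (fun j i => ‖x j i‖ ^ m) fun q j i =>
      (q.2.1.norm_le_polyNorm_mul_pow _).trans (mul_le_of_le_one_left (by positivity) q.2.2)
  refine mul_le_mul_of_nonneg_left
    (Real.iSup_le (fun φ => ?_) (Real.iSup_nonneg fun _ => by positivity)) h.1
  exact le_ciSup hbdd
    ⟨fun y => φ.1 fun _ => y, ⟨φ.1, fun _ => rfl⟩, (polyNorm_apply_const_le φ.1).trans φ.2⟩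

end FactorableStronglySumming

theorem factStronglySummingPoly_iff_symmetric_multilinear_general
    {𝕜 : Type*} [RCLike 𝕜] {X Y : Type*}
    [NormedAddCommGroup X] [NormedSpace 𝕜 X]
    [NormedAddCommGroup Y] [NormedSpace 𝕜 Y]
    (m : ℕ) (p : ℝ) (hp : 1 ≤ p)
    (T : ContinuousMultilinearMap 𝕜 (fun _ : Fin m => X) Y)
    (hsym : ∀ (x : Fin m → X) (σ : Equiv.Perm (Fin m)), T (x ∘ σ) = T x) :
    FactStronglySummingPoly 𝕜 m p (fun x => T fun _ => x) ↔ FactStronglySumming 𝕜 p T := by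
  have hp₀ : 0 < p := zero_lt_one.trans_le hp
  constructor
  · rintro ⟨-, C, hC⟩
    exact ⟨_, hC.factStronglySummingBound hsym hp₀⟩
  · rintro ⟨C, hC⟩
    exact ⟨⟨T, fun _ => rfl⟩, C, hC.factStronglySummingPolyBound hp₀⟩

/-- an `m`-homogeneous polynomial `P` (the diagonal of the symmetric
continuous `m`-linear map `T = P̌`) is factorable strongly `p`-summing iff `T` is a
factorable strongly `p`-summing multilinear operator. -/
theorem factStronglySummingPoly_iff_symmetric_multilinear
    {𝕜 : Type*} [RCLike 𝕜] {X Y : Type*}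
    [NormedAddCommGroup X] [NormedSpace 𝕜 X] [CompleteSpace X]
    [NormedAddCommGroup Y] [NormedSpace 𝕜 Y] [CompleteSpace Y]
    (m : ℕ) (p : ℝ) (hp : 1 ≤ p)
    (T : ContinuousMultilinearMap 𝕜 (fun _ : Fin m => X) Y)
    (hsym : ∀ (x : Fin m → X) (σ : Equiv.Perm (Fin m)), T (x ∘ σ) = T x) :
    FactStronglySummingPoly 𝕜 m p (fun x => T fun _ => x) ↔ FactStronglySumming 𝕜 p T :=
  factStronglySummingPoly_iff_symmetric_multilinear_general m p hp T hsym
end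

section
/- (Inclusion Theorem) Let 1 ≤ p ≤ q < ∞. Every factorable strongly p-summing m-homogeneous polynomial P : X → Y between Banach spaces is factorable strongly q-summing. -/
open scoped BigOperators
open MeasureTheory

/-! Weighting the `j`-th row by `s j`, where `(s j)` is a unit vector of `ℓ_r` with
`1/p = 1/q + 1/r`, turns `ℓ_p`-sums into `ℓ_q`-sums: by Hölder, `‖(s j b j)‖_p ≤ ‖b‖_q` for every
row vector `b`, and for the row norms `a` of `P` itself the weights `s j ∝ a j ^ (q/r)` attain
`‖(s j a j)‖_p = ‖a‖_q`. So the `p`-summing inequality, applied to the reweighted scalars, gives the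
`q`-summing one with the same constant. -/

open Finset

namespace Real

variable {ι : Type*} (t : Finset ι) {p q r : ℝ}

theorem rpow_sum_mul_rpow_le_of_sum_rpow_le_one (hrqp : r.HolderTriple q p) {s b : ι → ℝ}
    (hs : ∀ i, 0 ≤ s i) (hb : ∀ i, 0 ≤ b i) (hsr : ∑ i ∈ t, s i ^ r ≤ 1) :
    (∑ i ∈ t, (s i * b i) ^ p) ^ (1 / p) ≤ (∑ i ∈ t, b i ^ q) ^ (1 / q) := by
  have hp := hrqp.pos'
  have hholder := Lr_rpow_le_Lp_mul_Lq_of_nonneg t hrqp (fun i _ => hs i) (fun i _ => hb i)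
  have hB : 0 ≤ ∑ i ∈ t, b i ^ q := sum_nonneg fun i _ => rpow_nonneg (hb i) q
  have hsum_p : ∑ i ∈ t, (s i * b i) ^ p ≤ (∑ i ∈ t, b i ^ q) ^ (p / q) := by
    refine hholder.trans (mul_le_of_le_one_left (by positivity) ?_)
    exact rpow_le_one (sum_nonneg fun i _ => rpow_nonneg (hs i) r) hsr
      (div_nonneg hp.le hrqp.nonneg)
  calc (∑ i ∈ t, (s i * b i) ^ p) ^ (1 / p) ≤ ((∑ i ∈ t, b i ^ q) ^ (p / q)) ^ (1 / p) := by
        gcongr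
        exact sum_nonneg fun i _ => rpow_nonneg (mul_nonneg (hs i) (hb i)) p
    _ = (∑ i ∈ t, b i ^ q) ^ (1 / q) := by
        rw [← rpow_mul hB]
        congr 1
        field_simp

theorem exists_sum_rpow_le_one_rpow_sum_le (hrqp : r.HolderTriple q p) {a : ι → ℝ}
    (ha : ∀ i, 0 ≤ a i) :
    ∃ s : ι → ℝ, (∀ i, 0 ≤ s i) ∧ ∑ i ∈ t, s i ^ r ≤ 1 ∧
      (∑ i ∈ t, a i ^ q) ^ (1 / q) ≤ (∑ i ∈ t, (s i * a i) ^ p) ^ (1 / p) := by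
  obtain ⟨hr, hq, hp⟩ := hrqp.all_pos
  set A := ∑ i ∈ t, a i ^ q
  have hA : 0 ≤ A := sum_nonneg fun i _ => rpow_nonneg (ha i) q
  rcases hA.eq_or_lt with hA0 | hA
  · refine ⟨0, fun _ => le_rfl, by simp [zero_rpow hr.ne'], ?_⟩
    rw [← hA0, zero_rpow (one_div_pos.2 hq).ne']
    exact rpow_nonneg (sum_nonneg fun i _ => rpow_nonneg (mul_nonneg le_rfl (ha i)) p) _
  -- the equality case of Hölder's inequality
  have ha' : ∀ i, 0 ≤ a i ^ (q / r) := fun i => rpow_nonneg (ha i) _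
  have hA' : ∀ x : ℝ, 0 ≤ A ^ x := rpow_nonneg hA.le
  refine ⟨fun i => a i ^ (q / r) / A ^ (1 / r), fun i => div_nonneg (ha' i) (hA' _),
    le_of_eq ?_, le_of_eq ?_⟩
  · have hterm : ∀ i, (a i ^ (q / r) / A ^ (1 / r)) ^ r = a i ^ q / A := fun i => by
      rw [div_rpow (ha' i) (hA' _), ← rpow_mul (ha i), ← rpow_mul hA.le,
        div_mul_cancel₀ q hr.ne', one_div_mul_cancel hr.ne', rpow_one]
    rw [sum_congr rfl fun i _ => hterm i, ← sum_div, div_self hA.ne']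
  · have hinv := hrqp.inv_add_inv_eq_inv
    have hexp : (q / r + 1) * p = q := by
      field_simp at hinv ⊢
      linarith
    have hexp' : p / q = 1 - p / r := by
      field_simp at hinv ⊢
      linarith
    have hterm : ∀ i, (a i ^ (q / r) / A ^ (1 / r) * a i) ^ p = a i ^ q / A ^ (p / r) := fun i => by
      rw [div_mul_eq_mul_div, ← rpow_add_one' (ha i) (by positivity),
        div_rpow (rpow_nonneg (ha i) _) (hA' _), ← rpow_mul (ha i), ← rpow_mul hA.le, hexp,
        one_div_mul_eq_div]
    have hdiv : A / A ^ (p / r) = A ^ (p / q) := by rw [hexp', rpow_sub hA, rpow_one]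
    rw [sum_congr rfl fun i _ => hterm i, ← sum_div, hdiv, ← rpow_mul hA.le]
    congr 1
    field_simp

end Real

section Polynomial

variable {𝕜 : Type*} [RCLike 𝕜] {X Y : Type*} [NormedAddCommGroup X] [NormedSpace 𝕜 X]
  [NormedAddCommGroup Y] [NormedSpace 𝕜 Y] {m : ℕ} {P : X → Y}

theorem norm_sum_ofReal_mul_smul {ι : Type*} (t : Finset ι) {s : ℝ} (hs : 0 ≤ s) (c : ι → 𝕜)
    (v : ι → Y) : ‖∑ i ∈ t, ((s : 𝕜) * c i) • v i‖ = s * ‖∑ i ∈ t, c i • v i‖ := by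
  simp_rw [mul_smul, ← smul_sum, norm_smul, RCLike.norm_ofReal, abs_of_nonneg hs]

theorem IsHomogPoly.map_smul_s14 (hP : IsHomogPoly 𝕜 m P) (c : 𝕜) (x : X) :
    P (c • x) = c ^ m • P x := by
  obtain ⟨T, hT⟩ := hP
  simpa [hT, prod_const] using T.map_smul_univ (fun _ => c) (fun _ => x)

theorem IsHomogPoly.bddAbove_norm_unitBall (hP : IsHomogPoly 𝕜 m P) :
    BddAbove (Set.range fun z : {z : X // ‖z‖ ≤ 1} => ‖P z.1‖) := by
  obtain ⟨T, hT⟩ := hP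
  refine ⟨‖T‖, Set.forall_mem_range.2 fun z => ?_⟩
  calc ‖P z.1‖ ≤ ‖T‖ * ∏ _i : Fin m, ‖z.1‖ := hT z.1 ▸ T.le_opNorm _
    _ ≤ ‖T‖ * 1 := by
      gcongr
      rw [prod_const]
      exact pow_le_one₀ (norm_nonneg _) z.2
    _ = ‖T‖ := mul_one _

theorem IsHomogPoly.norm_le_polyNorm_mul_pow_s14 (hP : IsHomogPoly 𝕜 m P) {x : X} {c : ℝ}
    (hc : 0 < c) (hx : ‖x‖ ≤ c) : ‖P x‖ ≤ polyNorm P * c ^ m := by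
  have hcx : ‖(c : 𝕜)⁻¹ • x‖ ≤ 1 := by
    rw [norm_smul, norm_inv, RCLike.norm_ofReal, abs_of_pos hc]
    exact inv_mul_le_one_of_le₀ hx hc.le
  have hx' : x = (c : 𝕜) • (c : 𝕜)⁻¹ • x := by
    rw [smul_inv_smul₀ (RCLike.ofReal_ne_zero.2 hc.ne')]
  rw [hx', hP.map_smul_s14, norm_smul, norm_pow, RCLike.norm_ofReal, abs_of_pos hc, mul_comm]
  gcongr
  exact le_ciSup hP.bddAbove_norm_unitBall (⟨_, hcx⟩ : {z : X // ‖z‖ ≤ 1})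

-- An unbounded `⨆` in `ℝ` is `0`, so comparing the suprema needs this.
theorem bddAbove_range_rpow_sum_norm_sum_smul_homogPoly {q : ℝ} (hq : 0 ≤ q) {m₁ m₂ : ℕ}
    (x : Fin m₁ → Fin m₂ → X) (lam : Fin m₁ → Fin m₂ → 𝕜) :
    BddAbove (Set.range fun φ : {φ : X → 𝕜 // IsHomogPoly 𝕜 m φ ∧ polyNorm φ ≤ 1} =>
      (∑ j, ‖∑ i, lam j i • φ.1 (x j i)‖ ^ q) ^ (1 / q)) := by
  refine ⟨(∑ j, (∑ i, ‖lam j i‖ * (‖x j i‖ + 1) ^ m) ^ q) ^ (1 / q),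
    Set.forall_mem_range.2 fun φ => ?_⟩
  have hφ : ∀ z : X, ‖φ.1 z‖ ≤ (‖z‖ + 1) ^ m := fun z =>
    calc ‖φ.1 z‖ ≤ polyNorm φ.1 * (‖z‖ + 1) ^ m :=
          φ.2.1.norm_le_polyNorm_mul_pow_s14 (by positivity) (le_add_of_nonneg_right zero_le_one)
      _ ≤ (‖z‖ + 1) ^ m := mul_le_of_le_one_left (by positivity) φ.2.2
  gcongr with j _
  refine (norm_sum_le _ _).trans (sum_le_sum fun i _ => ?_)
  rw [norm_smul]
  gcongr
  exact hφ _

theorem FactStronglySummingPolyBound.of_exponent_le {p q C : ℝ}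
    (h : FactStronglySummingPolyBound 𝕜 m p P C) (hp : 0 < p) (hpq : p ≤ q) :
    FactStronglySummingPolyBound 𝕜 m q P C := by
  obtain ⟨hC, hbound⟩ := h
  refine ⟨hC, fun m₁ m₂ x lam => ?_⟩
  rcases hpq.eq_or_lt with rfl | hlt
  · exact hbound m₁ m₂ x lam
  have hrqp : (p⁻¹ - q⁻¹)⁻¹.HolderTriple q p :=
    ⟨by simp, by simpa using inv_strictAnti₀ hp hlt, hp.trans hlt⟩
  obtain ⟨s, hs, hsr, hle⟩ := Real.exists_sum_rpow_le_one_rpow_sum_le univ hrqp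
    (a := fun j => ‖∑ i, lam j i • P (x j i)‖) fun j => norm_nonneg _
  calc (∑ j, ‖∑ i, lam j i • P (x j i)‖ ^ q) ^ (1 / q)
      ≤ (∑ j, (s j * ‖∑ i, lam j i • P (x j i)‖) ^ p) ^ (1 / p) := hle
    _ = (∑ j, ‖∑ i, ((s j : 𝕜) * lam j i) • P (x j i)‖ ^ p) ^ (1 / p) := by
        simp_rw [norm_sum_ofReal_mul_smul _ (hs _)]
    _ ≤ C * ⨆ φ : {φ : X → 𝕜 // IsHomogPoly 𝕜 m φ ∧ polyNorm φ ≤ 1},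
          (∑ j, ‖∑ i, ((s j : 𝕜) * lam j i) • φ.1 (x j i)‖ ^ p) ^ (1 / p) := hbound _ _ _ _
    _ ≤ C * ⨆ φ : {φ : X → 𝕜 // IsHomogPoly 𝕜 m φ ∧ polyNorm φ ≤ 1},
          (∑ j, ‖∑ i, lam j i • φ.1 (x j i)‖ ^ q) ^ (1 / q) := by
        refine mul_le_mul_of_nonneg_left (ciSup_mono
          (bddAbove_range_rpow_sum_norm_sum_smul_homogPoly (hp.trans hlt).le x lam) fun φ => ?_) hC
        simp_rw [norm_sum_ofReal_mul_smul _ (hs _)]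
        exact Real.rpow_sum_mul_rpow_le_of_sum_rpow_le_one univ hrqp hs (fun j => norm_nonneg _) hsr

end Polynomial

theorem inclusion_factStronglySummingPoly_general
    {𝕜 : Type*} [RCLike 𝕜] {X Y : Type*}
    [NormedAddCommGroup X] [NormedSpace 𝕜 X]
    [NormedAddCommGroup Y] [NormedSpace 𝕜 Y]
    (m : ℕ) (p q : ℝ) (hp : 1 ≤ p) (hpq : p ≤ q) (P : X → Y)
    (hP : FactStronglySummingPoly 𝕜 m p P) :
    FactStronglySummingPoly 𝕜 m q P := by
  obtain ⟨hPoly, C, hC⟩ := hP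
  exact ⟨hPoly, C, hC.of_exponent_le (zero_lt_one.trans_le hp) hpq⟩

/-- Inclusion Theorem: if `1 ≤ p ≤ q < ∞`, every factorable strongly
`p`-summing `m`-homogeneous polynomial is factorable strongly `q`-summing. -/
theorem inclusion_factStronglySummingPoly
    {𝕜 : Type*} [RCLike 𝕜] {X Y : Type*}
    [NormedAddCommGroup X] [NormedSpace 𝕜 X] [CompleteSpace X]
    [NormedAddCommGroup Y] [NormedSpace 𝕜 Y] [CompleteSpace Y]
    (m : ℕ) (p q : ℝ) (hp : 1 ≤ p) (hpq : p ≤ q) (P : X → Y)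
    (hP : FactStronglySummingPoly 𝕜 m p P) :
    FactStronglySummingPoly 𝕜 m q P :=
  inclusion_factStronglySummingPoly_general m p q hp hpq P hP
end
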